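/- arXiv:2002.01345 — 2 statements merged into one kernel-verified Lean document; each statement's English description precedes it below -/
import Mathlib

section
/- ∏ over odd primes p of (1 - χ₄(p) · 2/(p³ + p^(-3)))^(-1) = 10395/11056. -/
open Finset Real

/-- The Dirichlet character mod 4 as a real-valued function on ℕ. -/
noncomputable def chi4 (n : ℕ) : ℝ :=
  if n % 4 = 1 then 1 else if n % 4 = 3 then -1 else 0

lemma bern5 : bernoulli' 5 = 0 := by
  rw [bernoulli'_def]
  norm_num [Finset.sum_range_succ, bernoulli'_zero, bernoulli'_one, bernoulli'_two,
    bernoulli'_three, bernoulli'_four, Nat.choose]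
lemma bern6 : bernoulli' 6 = 1/42 := by
  rw [bernoulli'_def]
  norm_num [Finset.sum_range_succ, bernoulli'_zero, bernoulli'_one, bernoulli'_two,
    bernoulli'_three, bernoulli'_four, bern5, Nat.choose]
lemma bern7 : bernoulli' 7 = 0 := by
  rw [bernoulli'_def]
  norm_num [Finset.sum_range_succ, bernoulli'_zero, bernoulli'_one, bernoulli'_two,
    bernoulli'_three, bernoulli'_four, bern5, bern6, Nat.choose]
lemma bern8 : bernoulli' 8 = -1/30 := by
  rw [bernoulli'_def]
  norm_num [Finset.sum_range_succ, bernoulli'_zero, bernoulli'_one, bernoulli'_two,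
    bernoulli'_three, bernoulli'_four, bern5, bern6, bern7, Nat.choose]
lemma bern9 : bernoulli' 9 = 0 := by
  rw [bernoulli'_def]
  norm_num [Finset.sum_range_succ, bernoulli'_zero, bernoulli'_one, bernoulli'_two,
    bernoulli'_three, bernoulli'_four, bern5, bern6, bern7, bern8, Nat.choose]
lemma bern10 : bernoulli' 10 = 5/66 := by
  rw [bernoulli'_def]
  norm_num [Finset.sum_range_succ, bernoulli'_zero, bernoulli'_one, bernoulli'_two,
    bernoulli'_three, bernoulli'_four, bern5, bern6, bern7, bern8, bern9, Nat.choose]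
lemma bern11 : bernoulli' 11 = 0 := by
  rw [bernoulli'_def]
  norm_num [Finset.sum_range_succ, bernoulli'_zero, bernoulli'_one, bernoulli'_two,
    bernoulli'_three, bernoulli'_four, bern5, bern6, bern7, bern8, bern9, bern10, Nat.choose]
lemma bern12 : bernoulli' 12 = -691/2730 := by
  rw [bernoulli'_def]
  norm_num [Finset.sum_range_succ, bernoulli'_zero, bernoulli'_one, bernoulli'_two,
    bernoulli'_three, bernoulli'_four, bern5, bern6, bern7, bern8, bern9, bern10, bern11,
    Nat.choose]
lemma bernN6 : bernoulli 6 = 1/42 := by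
  rw [bernoulli_eq_bernoulli'_of_ne_one (by norm_num), bern6]
lemma bernN12 : bernoulli 12 = -691/2730 := by
  rw [bernoulli_eq_bernoulli'_of_ne_one (by norm_num), bern12]

lemma chi4_mul (m n : ℕ) : chi4 (m * n) = chi4 m * chi4 n := by
  have hm : m % 4 = 0 ∨ m % 4 = 1 ∨ m % 4 = 2 ∨ m % 4 = 3 := by omega
  have hn : n % 4 = 0 ∨ n % 4 = 1 ∨ n % 4 = 2 ∨ n % 4 = 3 := by omega
  rcases hm with hm|hm|hm|hm <;> rcases hn with hn|hn|hn|hn <;>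
    simp [chi4, Nat.mul_mod, hm, hn]

/-- χ₄(n)/n³ as a monoid-with-zero hom. -/
noncomputable def f3 : ℕ →*₀ ℝ where
  toFun n := chi4 n * (((n : ℝ)) ^ 3)⁻¹
  map_zero' := by simp [chi4]
  map_one' := by simp [chi4]
  map_mul' m n := by
    show chi4 (m * n) * (((m * n : ℕ) : ℝ) ^ 3)⁻¹ = _
    rw [chi4_mul]
    push_cast
    rw [mul_pow, mul_inv]
    ring

/-- n⁻⁶ as a monoid-with-zero hom. -/
noncomputable def f6 : ℕ →*₀ ℝ where
  toFun n := (((n : ℝ)) ^ 6)⁻¹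
  map_zero' := by norm_num
  map_one' := by norm_num
  map_mul' m n := by push_cast; rw [mul_pow, mul_inv]

/-- n⁻¹² as a monoid-with-zero hom. -/
noncomputable def f12 : ℕ →*₀ ℝ where
  toFun n := (((n : ℝ)) ^ 12)⁻¹
  map_zero' := by norm_num
  map_one' := by norm_num
  map_mul' m n := by push_cast; rw [mul_pow, mul_inv]

lemma abs_chi4_le (n : ℕ) : |chi4 n| ≤ 1 := by
  unfold chi4; split_ifs <;> norm_num

lemma summable_f3 : Summable (fun n ↦ ‖f3 n‖) := by
  refine Summable.of_nonneg_of_le (fun n ↦ norm_nonneg _) (fun n ↦ ?_)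
    ((Real.summable_nat_pow_inv (p := 3)).mpr (by norm_num))
  have h0 : (0:ℝ) ≤ (((n : ℝ)) ^ 3)⁻¹ := by positivity
  calc ‖f3 n‖ = |chi4 n| * |(((n : ℝ)) ^ 3)⁻¹| := by
        rw [show f3 n = chi4 n * (((n : ℝ)) ^ 3)⁻¹ from rfl, Real.norm_eq_abs, abs_mul]
    _ ≤ 1 * (((n : ℝ)) ^ 3)⁻¹ := by
        rw [abs_of_nonneg h0]
        exact mul_le_mul_of_nonneg_right (abs_chi4_le n) h0
    _ = (((n : ℝ)) ^ 3)⁻¹ := one_mul _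

lemma summable_f6 : Summable (fun n ↦ ‖f6 n‖) := by
  have := (Real.summable_nat_pow_inv (p := 6)).mpr (by norm_num)
  refine this.congr fun n ↦ ?_
  have h0 : (0:ℝ) ≤ (((n : ℝ)) ^ 6)⁻¹ := by positivity
  simp [f6, abs_of_nonneg h0]

lemma summable_f12 : Summable (fun n ↦ ‖f12 n‖) := by
  have := (Real.summable_nat_pow_inv (p := 12)).mpr (by norm_num)
  refine this.congr fun n ↦ ?_
  have h0 : (0:ℝ) ≤ (((n : ℝ)) ^ 12)⁻¹ := by positivity
  simp [f12, abs_of_nonneg h0]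

lemma sin_eq_chi4 (n : ℕ) : Real.sin (Real.pi * n / 2) = chi4 n := by
  set q := n / 4 with hq
  set r := n % 4 with hrdef
  have hdm : 4 * q + r = n := Nat.div_add_mod n 4
  have hcast : (n : ℝ) = 4 * (q : ℝ) + (r : ℝ) := by exact_mod_cast hdm.symm
  have h1 : Real.pi * n / 2 = Real.pi * (r : ℝ) / 2 + ((q : ℤ) : ℝ) * (2 * Real.pi) := by
    rw [hcast]; push_cast; ring
  rw [h1, Real.sin_add_int_mul_two_pi]
  have hr : r = 0 ∨ r = 1 ∨ r = 2 ∨ r = 3 := by omega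
  rcases hr with hr|hr|hr|hr
  · rw [hr]; simp [chi4, ← hrdef, hr]
  · rw [hr]
    rw [show Real.pi * ((1 : ℕ) : ℝ) / 2 = Real.pi / 2 by push_cast; ring,
      Real.sin_pi_div_two]
    simp [chi4, ← hrdef, hr]
  · rw [hr]
    rw [show Real.pi * ((2 : ℕ) : ℝ) / 2 = Real.pi by push_cast; ring, Real.sin_pi]
    simp [chi4, ← hrdef, hr]
  · rw [hr]
    rw [show Real.pi * ((3 : ℕ) : ℝ) / 2 = Real.pi / 2 + Real.pi by push_cast; ring,
      Real.sin_add_pi, Real.sin_pi_div_two]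
    simp [chi4, ← hrdef, hr]

lemma hasSum_f3 : HasSum (fun n : ℕ ↦ f3 n) (Real.pi ^ 3 / 32) := by
  refine hasSum_L_function_mod_four_eval_three.congr_fun fun n ↦ ?_
  rw [sin_eq_chi4]
  simp [f3, one_div, mul_comm]

lemma hasSum_f6 : HasSum (fun n : ℕ ↦ f6 n) (Real.pi ^ 6 / 945) := by
  have h := hasSum_zeta_nat (k := 3) (by norm_num)
  have he : ((-1 : ℝ)) ^ (3 + 1) * (2 : ℝ) ^ (2 * 3 - 1) * Real.pi ^ (2 * 3) *
      (bernoulli (2 * 3) : ℝ) / (Nat.factorial (2 * 3) : ℝ) = Real.pi ^ 6 / 945 := by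
    rw [show (2 * 3 : ℕ) = 6 from rfl, bernN6]
    norm_num [Nat.factorial]
    ring
  rw [he] at h
  refine h.congr_fun fun n ↦ ?_
  simp [f6, one_div]

lemma hasSum_f12 : HasSum (fun n : ℕ ↦ f12 n) (691 * Real.pi ^ 12 / 638512875) := by
  have h := hasSum_zeta_nat (k := 6) (by norm_num)
  have he : ((-1 : ℝ)) ^ (6 + 1) * (2 : ℝ) ^ (2 * 6 - 1) * Real.pi ^ (2 * 6) *
      (bernoulli (2 * 6) : ℝ) / (Nat.factorial (2 * 6) : ℝ) = 691 * Real.pi ^ 12 / 638512875 := by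
    rw [show (2 * 6 : ℕ) = 12 from rfl, bernN12]
    norm_num [Nat.factorial]
    ring
  rw [he] at h
  refine h.congr_fun fun n ↦ ?_
  simp [f12, one_div]

lemma f3_apply (n : ℕ) : f3 n = chi4 n * (((n : ℝ)) ^ 3)⁻¹ := rfl
lemma f6_apply (n : ℕ) : f6 n = (((n : ℝ)) ^ 6)⁻¹ := rfl
lemma f12_apply (n : ℕ) : f12 n = (((n : ℝ)) ^ 12)⁻¹ := rfl

lemma key_alg (x c : ℝ) (hx : 3 ≤ x) (hc : c = 1 ∨ c = -1) :
    (1 - c * (2 / (x ^ 3 + (x ^ 3)⁻¹)))⁻¹ =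
    (1 - (x ^ 12)⁻¹) * ((1 - (x ^ 6)⁻¹)⁻¹ * ((1 - c * (x ^ 3)⁻¹)⁻¹ * (1 - c * (x ^ 3)⁻¹)⁻¹)) := by
  have hx0 : (0:ℝ) < x := by linarith
  have hxne : x ≠ 0 := ne_of_gt hx0
  have hx27 : (27:ℝ) ≤ x ^ 3 := by
    have h := pow_le_pow_left₀ (by norm_num : (0:ℝ) ≤ 3) hx 3
    norm_num at h
    linarith
  have h3 : (0:ℝ) < x ^ 3 := by positivity
  have h3' : x ^ 3 ≠ 0 := ne_of_gt h3
  have hsum : (0:ℝ) < x ^ 3 + (x ^ 3)⁻¹ := by positivity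
  have hsum' : x ^ 3 + (x ^ 3)⁻¹ ≠ 0 := ne_of_gt hsum
  have hx6 : (27:ℝ) ≤ x ^ 6 := by
    have h := pow_le_pow_left₀ (by norm_num : (0:ℝ) ≤ 3) hx 6
    norm_num at h
    linarith
  have h6' : x ^ 6 ≠ 0 := by positivity
  have h61 : x ^ 6 - 1 ≠ 0 := ne_of_gt (by linarith)
  have h6p : x ^ 6 + 1 ≠ 0 := by positivity
  have e2 : 1 - (x ^ 12)⁻¹ = (x ^ 12 - 1) / x ^ 12 := by
    field_simp
  have e3 : (1 - (x ^ 6)⁻¹)⁻¹ = x ^ 6 / (x ^ 6 - 1) := by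
    rw [show (1 : ℝ) - (x ^ 6)⁻¹ = (x ^ 6 - 1) / x ^ 6 by field_simp, inv_div]
  rcases hc with rfl | rfl
  · have hc3 : x ^ 3 - 1 ≠ 0 := ne_of_gt (by linarith)
    have e1 : 1 - 1 * (2 / (x ^ 3 + (x ^ 3)⁻¹)) = (x ^ 3 - 1) ^ 2 / (x ^ 6 + 1) := by
      rw [one_mul]
      field_simp
      ring
    have e4 : (1 - 1 * (x ^ 3)⁻¹)⁻¹ = x ^ 3 / (x ^ 3 - 1) := by
      rw [one_mul, show (1 : ℝ) - (x ^ 3)⁻¹ = (x ^ 3 - 1) / x ^ 3 by field_simp, inv_div]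
    rw [e1, e2, e3, e4, inv_div]
    have hsq : (x ^ 3 - 1) ^ 2 ≠ 0 := pow_ne_zero _ hc3
    field_simp
    ring
  · have hc3 : x ^ 3 + 1 ≠ 0 := by positivity
    have e1 : 1 - -1 * (2 / (x ^ 3 + (x ^ 3)⁻¹)) = (x ^ 3 + 1) ^ 2 / (x ^ 6 + 1) := by
      rw [neg_one_mul, sub_neg_eq_add]
      field_simp
      ring
    have e4 : (1 - -1 * (x ^ 3)⁻¹)⁻¹ = x ^ 3 / (x ^ 3 + 1) := by
      rw [neg_one_mul, sub_neg_eq_add,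
        show (1 : ℝ) + (x ^ 3)⁻¹ = (x ^ 3 + 1) / x ^ 3 by field_simp, inv_div]
    rw [e1, e2, e3, e4, inv_div]
    have hsq : (x ^ 3 + 1) ^ 2 ≠ 0 := pow_ne_zero _ hc3
    field_simp
    ring

noncomputable def tfac (p : Nat.Primes) : ℝ :=
  (1 - chi4 p * (2 / (((p : ℕ) : ℝ) ^ 3 + (((p : ℕ) : ℝ) ^ 3)⁻¹)))⁻¹

theorem prod_odd_primes_beta_three :
    ∏' p : {p : Nat.Primes // (p : ℕ) ≠ 2},
      (1 - chi4 p * (2 / (((p : ℕ) : ℝ) ^ 3 + (((p : ℕ) : ℝ) ^ 3)⁻¹)))⁻¹ = 10395 / 11056 := by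
  classical
  have h3 : HasProd (fun p : Nat.Primes ↦ (1 - f3 p)⁻¹) (Real.pi ^ 3 / 32) := by
    have h := EulerProduct.eulerProduct_completely_multiplicative_hasProd summable_f3
    rwa [hasSum_f3.tsum_eq] at h
  have h6 : HasProd (fun p : Nat.Primes ↦ (1 - f6 p)⁻¹) (Real.pi ^ 6 / 945) := by
    have h := EulerProduct.eulerProduct_completely_multiplicative_hasProd summable_f6
    rwa [hasSum_f6.tsum_eq] at h
  have h12 : HasProd (fun p : Nat.Primes ↦ (1 - f12 p)⁻¹) (691 * Real.pi ^ 12 / 638512875) := by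
    have h := EulerProduct.eulerProduct_completely_multiplicative_hasProd summable_f12
    rwa [hasSum_f12.tsum_eq] at h
  have hπ : (0:ℝ) < Real.pi := Real.pi_pos
  have hz12 : (691 * Real.pi ^ 12 / 638512875 : ℝ) ≠ 0 := by positivity
  have h12' : HasProd (fun p : Nat.Primes ↦ (1 - f12 p))
      (691 * Real.pi ^ 12 / 638512875)⁻¹ := by
    have ht := Filter.Tendsto.inv₀ h12 hz12
    simpa only [HasProd, Finset.prod_inv_distrib, inv_inv] using ht
  set G : ℝ := (691 * Real.pi ^ 12 / 638512875)⁻¹ *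
      (Real.pi ^ 6 / 945 * (Real.pi ^ 3 / 32 * (Real.pi ^ 3 / 32))) with hGdef
  set g : Nat.Primes → ℝ :=
    fun p ↦ (1 - f12 p) * ((1 - f6 p)⁻¹ * ((1 - f3 p)⁻¹ * (1 - f3 p)⁻¹)) with hgdef
  have hbig : HasProd g G := h12'.mul (h6.mul (h3.mul h3))
  set two : Nat.Primes := ⟨2, Nat.prime_two⟩ with htwo
  have hg2 : g two = 65 / 64 := by
    have hc2 : chi4 2 = 0 := by simp [chi4]
    simp only [hgdef, htwo, f3_apply, f6_apply, f12_apply, hc2]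
    norm_num
  have hkey : ∀ p : Nat.Primes, (p : ℕ) ≠ 2 → tfac p = g p := by
    rintro ⟨P, hP⟩ hne
    have hne' : P ≠ 2 := hne
    have hP3 : 3 ≤ P := by
      have h2 := hP.two_le
      omega
    have hx : (3:ℝ) ≤ (P : ℝ) := by exact_mod_cast hP3
    have hodd : P % 2 = 1 := Nat.odd_iff.mp (hP.odd_of_ne_two hne')
    have hmod : P % 4 = 1 ∨ P % 4 = 3 := by omega
    have hc : chi4 P = 1 ∨ chi4 P = -1 := by
      rcases hmod with h | h
      · left; simp [chi4, h]
      · right; simp [chi4, h]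
    show (1 - chi4 P * (2 / ((P : ℝ) ^ 3 + ((P : ℝ) ^ 3)⁻¹)))⁻¹ = _
    rw [hgdef]
    simp only [f3_apply, f6_apply, f12_apply]
    exact key_alg (P : ℝ) (chi4 P) hx hc
  have hind : (fun p ↦ g p * (if p = two then (65/64 : ℝ)⁻¹ else 1)) =
      Set.mulIndicator {p : Nat.Primes | (p : ℕ) ≠ 2} tfac := by
    funext p
    by_cases hp : p = two
    · subst hp
      rw [if_pos rfl, hg2,
        Set.mulIndicator_of_notMem (fun h ↦ h rfl : two ∉ {p : Nat.Primes | (p : ℕ) ≠ 2})]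
      norm_num
    · have hmem : (p : ℕ) ≠ 2 := fun h ↦ hp (Subtype.ext (h.trans rfl))
      rw [if_neg hp, mul_one,
        Set.mulIndicator_of_mem (show p ∈ {p : Nat.Primes | (p : ℕ) ≠ 2} from hmem),
        hkey p hmem]
  have hprod : HasProd (Set.mulIndicator {p : Nat.Primes | (p : ℕ) ≠ 2} tfac)
      (G * (65/64 : ℝ)⁻¹) := by
    rw [← hind]
    exact hbig.mul (hasProd_ite_eq two _)
  have hgoal : ∏' p : {p : Nat.Primes // (p : ℕ) ≠ 2},
      (1 - chi4 p * (2 / (((p : ℕ) : ℝ) ^ 3 + (((p : ℕ) : ℝ) ^ 3)⁻¹)))⁻¹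
      = G * (65/64 : ℝ)⁻¹ := by
    have ht : ∏' p : ↥{p : Nat.Primes | (p : ℕ) ≠ 2}, tfac ↑p
        = ∏' p, Set.mulIndicator {p : Nat.Primes | (p : ℕ) ≠ 2} tfac p :=
      tprod_subtype _ tfac
    exact ht.trans hprod.tprod_eq
  rw [hgoal, hGdef]
  have hπ0 : Real.pi ≠ 0 := Real.pi_ne_zero
  field_simp
  ring
end

section
/- If ρ = 1/2 + it is a zero of the Riemann zeta function with t real, then γ = lim_{k→∞} [2 ∑_{n=1}^{k} ∑_{m=n+1}^{k} (-1)^(m+n+1) cos(t log(m/n)) / √(mn) − log k]. -/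
open Real Filter


noncomputable def etaTerm (s : ℂ) (m : ℕ) : ℂ :=
  ((2 * m + 1 : ℕ) : ℂ) ^ (-s) - ((2 * m + 2 : ℕ) : ℂ) ^ (-s)


noncomputable def etaF (s : ℂ) : ℂ := ∑' m : ℕ, etaTerm s m


noncomputable def Hfun (s : ℂ) : ℂ :=
  ((s - 1) * completedRiemannZeta₀ s - (s - 1) / s + 1) * (Complex.Gammaℝ s)⁻¹


lemma cpow_diff_bound {s : ℂ} (hs : 0 < s.re) {a : ℝ} (ha : 1 ≤ a) :
    ‖(a : ℂ) ^ (-s) - ((a + 1 : ℝ) : ℂ) ^ (-s)‖ ≤ ‖s‖ * a ^ (-s.re - 1) := by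
  have ha0 : (0 : ℝ) < a := lt_of_lt_of_le one_pos ha
  set I : Set ℝ := Set.Icc a (a + 1) with hI
  have hderiv : ∀ x ∈ I, HasDerivWithinAt (fun x : ℝ => ((x : ℂ)) ^ (-s))
      (-s * (x : ℂ) ^ (-s - 1)) I x := by
    intro x hx
    have hx0 : (0 : ℝ) < x := lt_of_lt_of_le ha0 hx.1
    exact ((Complex.hasStrictDerivAt_cpow_const (c := -s)
      (Complex.ofReal_mem_slitPlane.2 hx0)).hasDerivAt.comp_ofReal).hasDerivWithinAt
  have hbound : ∀ x ∈ I, ‖-s * (x : ℂ) ^ (-s - 1)‖ ≤ ‖s‖ * a ^ (-s.re - 1) := by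
    intro x hx
    have hx0 : (0 : ℝ) < x := lt_of_lt_of_le ha0 hx.1
    rw [norm_mul, norm_neg]
    have h1 : ‖((x : ℂ)) ^ (-s - 1)‖ = x ^ (-s.re - 1) := by
      rw [Complex.norm_cpow_eq_rpow_re_of_pos hx0]
      norm_num
    rw [h1]
    exact mul_le_mul_of_nonneg_left
      (Real.rpow_le_rpow_of_nonpos ha0 hx.1 (by linarith)) (norm_nonneg s)
  have key := (convex_Icc a (a + 1)).norm_image_sub_le_of_norm_hasDerivWithin_le hderiv hbound
    (Set.left_mem_Icc.2 (by linarith)) (Set.right_mem_Icc.2 (by linarith))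
  rw [norm_sub_rev]
  simpa using key


lemma etaTerm_norm_le {s : ℂ} (hs : 0 < s.re) (m : ℕ) :
    ‖etaTerm s m‖ ≤ ‖s‖ * ((2 * m + 1 : ℝ)) ^ (-s.re - 1) := by
  have h := cpow_diff_bound hs (a := (2 * m + 1 : ℝ)) (by linarith [Nat.cast_nonneg (α := ℝ) m])
  unfold etaTerm
  convert h using 4 <;> push_cast <;> ring


lemma etaTerm_norm_le' {δ R : ℝ} (hδ : 0 < δ) {s : ℂ} (h1 : δ ≤ s.re) (h2 : ‖s‖ ≤ R) (m : ℕ) :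
    ‖etaTerm s m‖ ≤ R * ((m + 1 : ℝ)) ^ (-δ - 1) := by
  refine (etaTerm_norm_le (lt_of_lt_of_le hδ h1) m).trans ?_
  have h3 : ((2 * m + 1 : ℝ)) ^ (-s.re - 1) ≤ ((2 * m + 1 : ℝ)) ^ (-δ - 1) :=
    Real.rpow_le_rpow_of_exponent_le (by linarith [Nat.cast_nonneg (α := ℝ) m])
      (by linarith)
  have h4 : ((2 * m + 1 : ℝ)) ^ (-δ - 1) ≤ ((m + 1 : ℝ)) ^ (-δ - 1) :=
    Real.rpow_le_rpow_of_nonpos (by positivity)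
      (by linarith [Nat.cast_nonneg (α := ℝ) m]) (by linarith)
  exact mul_le_mul h2 (h3.trans h4) (by positivity) ((norm_nonneg s).trans h2)


lemma summable_aux {δ : ℝ} (hδ : 0 < δ) (R : ℝ) :
    Summable (fun m : ℕ => R * ((m + 1 : ℝ)) ^ (-δ - 1)) := by
  apply Summable.mul_left
  have h : Summable (fun n : ℕ => (n : ℝ) ^ (-δ - 1)) :=
    Real.summable_nat_rpow.mpr (by linarith)
  have h2 := (_root_.summable_nat_add_iff 1).mpr h
  simpa using h2


lemma summable_etaTerm {s : ℂ} (hs : 0 < s.re) : Summable (etaTerm s) :=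
  Summable.of_norm_bounded (summable_aux hs ‖s‖) fun m => etaTerm_norm_le' hs le_rfl le_rfl m


lemma differentiableOn_etaF : DifferentiableOn ℂ etaF {s : ℂ | 0 < s.re} := by
  intro s₀ hs₀
  have h0 : 0 < s₀.re := hs₀
  set r : ℝ := s₀.re / 2 with hr
  have hrpos : 0 < r := by positivity
  have hball : DifferentiableOn ℂ (fun w => ∑' m : ℕ, etaTerm w m) (Metric.ball s₀ r) := by
    apply Complex.differentiableOn_tsum_of_summable_norm (F := fun (m : ℕ) (s : ℂ) => etaTerm s m)
      (u := fun m => (‖s₀‖ + r) * ((m + 1 : ℝ)) ^ (-r - 1)) (summable_aux hrpos _)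
      (fun m => ?_) Metric.isOpen_ball (fun m w hw => ?_)
    · unfold etaTerm
      apply DifferentiableOn.sub
      · exact (Differentiable.const_cpow (differentiable_id.neg)
          (Or.inl (by exact_mod_cast Nat.succ_ne_zero (2 * m)))).differentiableOn
      · exact (Differentiable.const_cpow (differentiable_id.neg)
          (Or.inl (by exact_mod_cast Nat.succ_ne_zero (2 * m + 1)))).differentiableOn
    · have hw' : ‖w - s₀‖ < r := by
        simpa [Metric.mem_ball, dist_eq_norm] using hw
      have hre : r ≤ w.re := by
        have h1 : |(w - s₀).re| ≤ ‖w - s₀‖ := Complex.abs_re_le_norm (w - s₀)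
        rw [Complex.sub_re] at h1
        have := abs_le.1 h1
        have : s₀.re - ‖w - s₀‖ ≤ w.re := by linarith [this.1]
        nlinarith
      have hnorm : ‖w‖ ≤ ‖s₀‖ + r := by
        calc ‖w‖ = ‖s₀ + (w - s₀)‖ := by ring_nf
        _ ≤ ‖s₀‖ + ‖w - s₀‖ := norm_add_le _ _
        _ ≤ ‖s₀‖ + r := by linarith
      exact etaTerm_norm_le' hrpos hre hnorm m
  exact (hball.differentiableAt
    (Metric.isOpen_ball.mem_nhds (Metric.mem_ball_self hrpos))).differentiableWithinAt


lemma hasSum_zeta {s : ℂ} (hs : 1 < s.re) :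
    HasSum (fun n : ℕ => ((n : ℂ)) ^ (-s)) (riemannZeta s) := by
  have hsum : Summable (fun n : ℕ => 1 / (n : ℂ) ^ s) := Complex.summable_one_div_nat_cpow.2 hs
  have := hsum.hasSum
  rw [← zeta_eq_tsum_one_div_nat_cpow hs] at this
  refine this.congr_fun fun n => ?_
  rw [Complex.cpow_neg, one_div]


lemma etaF_eq {s : ℂ} (hs : 1 < s.re) :
    etaF s = (1 - (2 : ℂ) ^ ((1 : ℂ) - s)) * riemannZeta s := by
  have hz := hasSum_zeta hs
  have hsum := hz.summable
  set f : ℕ → ℂ := fun n => ((n : ℂ)) ^ (-s) with hf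
  have hs0 : s ≠ 0 := by
    intro h; rw [h] at hs; simp only [Complex.zero_re] at hs; linarith
  have hf0 : f 0 = 0 := by
    simp only [hf, Nat.cast_zero]
    exact Complex.zero_cpow (neg_ne_zero.2 hs0)
  have heven : Summable (fun m : ℕ => f (2 * m)) :=
    hsum.comp_injective (fun a b h => by omega)
  have hodd : Summable (fun m : ℕ => f (2 * m + 1)) :=
    hsum.comp_injective (fun a b h => by omega)
  have h2sum : Summable (fun m : ℕ => f (2 * m + 2)) :=
    hsum.comp_injective (fun a b h => by omega)
  have hsplit : (∑' m : ℕ, f (2 * m)) + (∑' m : ℕ, f (2 * m + 1)) = riemannZeta s := by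
    rw [tsum_even_add_odd heven hodd, hz.tsum_eq]
  have hshift : (∑' m : ℕ, f (m + 1)) = riemannZeta s := by
    have := Summable.tsum_eq_zero_add hsum
    rw [hz.tsum_eq, hf0, zero_add] at this
    exact this.symm
  have h1 : (∑' m : ℕ, f (2 * m)) = ∑' m : ℕ, f (2 * m + 2) := by
    rw [Summable.tsum_eq_zero_add heven, mul_zero, hf0, zero_add]
    exact tsum_congr fun m => by rw [Nat.mul_succ]
  have h2 : ∀ m : ℕ, f (2 * m + 2) = (2 : ℂ) ^ (-s) * f (m + 1) := by
    intro m
    have e1 : 2 * m + 2 = 2 * (m + 1) := by ring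
    simp only [hf, e1, Nat.cast_mul]
    rw [Complex.natCast_mul_natCast_cpow]
    norm_num
  have h2val : (∑' m : ℕ, f (2 * m + 2)) = (2 : ℂ) ^ (-s) * riemannZeta s := by
    simp_rw [h2]
    rw [tsum_mul_left, hshift]
  have heven_val : (∑' m : ℕ, f (2 * m)) = (2 : ℂ) ^ (-s) * riemannZeta s := by
    rw [h1, h2val]
  have hodd_val : (∑' m : ℕ, f (2 * m + 1))
      = riemannZeta s - (2 : ℂ) ^ (-s) * riemannZeta s := by
    rw [heven_val] at hsplit
    linear_combination hsplit
  have hmain : etaF s = (∑' m : ℕ, f (2 * m + 1)) - ∑' m : ℕ, f (2 * m + 2) := by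
    rw [etaF]
    rw [← Summable.tsum_sub hodd h2sum]
    exact tsum_congr fun m => rfl
  rw [hmain, hodd_val, h2val]
  have h2pow : (2 : ℂ) ^ ((1 : ℂ) - s) = 2 * (2 : ℂ) ^ (-s) := by
    rw [sub_eq_add_neg, Complex.cpow_add _ _ (by norm_num), Complex.cpow_one]
  rw [h2pow]
  ring


lemma Hfun_eq {s : ℂ} (h0 : s ≠ 0) (h1 : s ≠ 1) : Hfun s = (s - 1) * riemannZeta s := by
  have h1' : (1 : ℂ) - s ≠ 0 := sub_ne_zero.2 (Ne.symm h1)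
  rw [riemannZeta_def_of_ne_zero h0, completedRiemannZeta_eq, Hfun,
    div_eq_mul_inv (completedRiemannZeta₀ s - 1 / s - 1 / (1 - s)), ← mul_assoc]
  congr 1
  field_simp
  ring


lemma differentiableOn_Hfun : DifferentiableOn ℂ Hfun {s : ℂ | 0 < s.re} := by
  apply DifferentiableOn.mul
  · apply DifferentiableOn.add_const
    apply DifferentiableOn.sub
    · exact ((differentiableOn_id.sub_const 1).mul
        differentiable_completedZeta₀.differentiableOn)
    · exact (differentiableOn_id.sub_const 1).div differentiableOn_id
        (fun s hs => by intro h; rw [h] at hs; simp only [Set.mem_setOf_eq, Complex.zero_re] at hs; exact lt_irrefl 0 hs)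
  · exact Complex.differentiable_Gammaℝ_inv.differentiableOn


lemma etaF_eq_zero {t : ℝ} (hzero : riemannZeta (1 / 2 + t * Complex.I) = 0) :
    etaF (1 / 2 + t * Complex.I) = 0 := by
  set s₀ : ℂ := 1 / 2 + t * Complex.I with hs₀def
  have hre : s₀.re = 1 / 2 := by
    simp [hs₀def, Complex.add_re, Complex.div_re, Complex.mul_re]
  have h0 : s₀ ≠ 0 := by
    intro h; rw [h] at hre; simp at hre
  have h1 : s₀ ≠ 1 := by
    intro h; rw [h] at hre; norm_num at hre
  set Ω : Set ℂ := {s : ℂ | 0 < s.re} with hΩdef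
  have hΩopen : IsOpen Ω := isOpen_lt continuous_const Complex.continuous_re
  have hΩconn : IsPreconnected Ω := (convex_halfSpace_re_gt 0).isPreconnected
  set f : ℂ → ℂ := fun s => (s - 1) * etaF s with hfdef
  set g : ℂ → ℂ := fun s => (1 - (2 : ℂ) ^ ((1 : ℂ) - s)) * Hfun s with hgdef
  have hf : AnalyticOnNhd ℂ f Ω := by
    apply DifferentiableOn.analyticOnNhd _ hΩopen
    exact (differentiableOn_id.sub_const 1).mul differentiableOn_etaF
  have hg : AnalyticOnNhd ℂ g Ω := by
    apply DifferentiableOn.analyticOnNhd _ hΩopen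
    apply DifferentiableOn.mul _ differentiableOn_Hfun
    apply DifferentiableOn.const_sub
    exact (Differentiable.const_cpow (differentiable_const _ |>.sub differentiable_id)
      (Or.inl (by norm_num))).differentiableOn
  have h2Ω : (2 : ℂ) ∈ Ω := by
    simp [hΩdef]
  have heq : f =ᶠ[nhds (2 : ℂ)] g := by
    have hmem : {s : ℂ | 1 < s.re} ∈ nhds (2 : ℂ) :=
      (isOpen_lt continuous_const Complex.continuous_re).mem_nhds (by simp)
    filter_upwards [hmem] with s hs
    have hs' : 1 < s.re := hs
    have hs0 : s ≠ 0 := by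
      intro h; rw [h] at hs'; simp only [Complex.zero_re] at hs'; linarith
    have hs1 : s ≠ 1 := by
      intro h; rw [h] at hs'; simp only [Complex.one_re] at hs'; linarith
    simp only [hfdef, hgdef]
    rw [etaF_eq hs', Hfun_eq hs0 hs1]
    ring
  have hs₀Ω : s₀ ∈ Ω := by
    simp only [hΩdef, Set.mem_setOf_eq, hre]; norm_num
  have hval := hf.eqOn_of_preconnected_of_eventuallyEq hg hΩconn h2Ω heq hs₀Ω
  simp only [hfdef, hgdef] at hval
  rw [Hfun_eq h0 h1, hzero, mul_zero, mul_zero] at hval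
  have hne : s₀ - 1 ≠ 0 := sub_ne_zero.2 h1
  exact (mul_eq_zero.1 hval).resolve_left hne


noncomputable def Spart (s : ℂ) (k : ℕ) : ℂ :=
  ∑ n ∈ Finset.Icc 1 k, (-1 : ℂ) ^ (n + 1) * ((n : ℂ)) ^ (-s)


lemma Spart_eq (s : ℂ) (k : ℕ) :
    Spart s k = (∑ m ∈ Finset.range (k / 2), etaTerm s m)
      + (if Odd k then ((k : ℂ)) ^ (-s) else 0) := by
  induction k with
  | zero => simp [Spart]
  | succ k ih =>
    have hstep : Spart s (k + 1) = Spart s k + (-1 : ℂ) ^ (k + 2) * (((k + 1 : ℕ) : ℂ)) ^ (-s) := by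
      rw [Spart, Spart, Finset.sum_Icc_succ_top (Nat.le_add_left 1 k)]
    rcases Nat.even_or_odd k with hk | hk
    · obtain ⟨c, hc⟩ := hk
      have h2 : (k + 1) / 2 = k / 2 := by omega
      have hodd : Odd (k + 1) := ⟨c, by omega⟩
      have hkodd : ¬ Odd k := by simp [Nat.not_odd_iff_even]; exact ⟨c, hc⟩
      have hsign : (-1 : ℂ) ^ (k + 2) = 1 := Even.neg_one_pow ⟨c + 1, by omega⟩
      rw [hstep, ih, h2]
      simp [hkodd, hodd, hsign]
    · obtain ⟨c, hc⟩ := hk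
      have hk : Odd k := ⟨c, hc⟩
      have h2 : (k + 1) / 2 = k / 2 + 1 := by omega
      have heven : ¬ Odd (k + 1) := by simp [Nat.not_odd_iff_even, Even.add_one, Nat.even_add_one,
        Nat.not_even_iff_odd, hk]
      have hsign : (-1 : ℂ) ^ (k + 2) = -1 := Odd.neg_one_pow ⟨c + 1, by omega⟩
      have hterm : etaTerm s (k / 2) = ((k : ℂ)) ^ (-s) - (((k + 1 : ℕ)) : ℂ) ^ (-s) := by
        rw [etaTerm, (by omega : 2 * (k / 2) + 1 = k), (by omega : 2 * (k / 2) + 2 = k + 1)]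
      rw [hstep, ih, h2, Finset.sum_range_succ, hterm]
      simp only [hk, if_pos, heven, if_neg, hsign]
      push_cast
      ring


lemma s0_re (t : ℝ) : (1 / 2 + t * Complex.I).re = 1 / 2 := by
  simp [Complex.add_re, Complex.div_re, Complex.mul_re]


lemma Spart_tendsto_zero {t : ℝ} (hzero : riemannZeta (1 / 2 + t * Complex.I) = 0) :
    Tendsto (Spart (1 / 2 + t * Complex.I)) atTop (nhds 0) := by
  set s₀ : ℂ := 1 / 2 + t * Complex.I with hs₀def
  have hre : s₀.re = 1 / 2 := s0_re t
  have hrepos : 0 < s₀.re := by rw [hre]; norm_num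
  have hsum := (summable_etaTerm hrepos).hasSum
  have htsum : Tendsto (fun N => ∑ m ∈ Finset.range N, etaTerm s₀ m) atTop (nhds 0) := by
    have := hsum.tendsto_sum_nat
    rwa [show (∑' m : ℕ, etaTerm s₀ m) = 0 from etaF_eq_zero hzero] at this
  have hdiv : Tendsto (fun k : ℕ => k / 2) atTop atTop :=
    Filter.tendsto_atTop_atTop.mpr fun b => ⟨2 * b, fun n hn => by omega⟩
  have h1 : Tendsto (fun k : ℕ => ∑ m ∈ Finset.range (k / 2), etaTerm s₀ m) atTop (nhds 0) :=
    htsum.comp hdiv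
  have hb : Tendsto (fun k : ℕ => ((k : ℝ)) ^ (-s₀.re)) atTop (nhds 0) := by
    have h3 : (0:ℝ) < s₀.re := hrepos
    exact (tendsto_rpow_neg_atTop h3).comp tendsto_natCast_atTop_atTop
  have h2 : Tendsto (fun k : ℕ => if Odd k then ((k : ℂ)) ^ (-s₀) else 0) atTop (nhds 0) := by
    refine squeeze_zero_norm (fun k => ?_) hb
    by_cases hk : Odd k
    · have h : 0 < k := by
        rcases Nat.eq_zero_or_pos k with h | h
        · exact absurd hk (by simp [h])
        · exact h
      simp only [hk, if_pos]
      rw [show ((k : ℕ) : ℂ) = (((k : ℝ)) : ℂ) by push_cast; rfl,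
        Complex.norm_cpow_eq_rpow_re_of_pos (by exact_mod_cast h), Complex.neg_re]
    · simp only [hk, if_neg, not_false_iff, norm_zero]
      positivity
  have htot := h1.add h2
  rw [add_zero] at htot
  exact Filter.Tendsto.congr (fun k => (Spart_eq s₀ k).symm) htot


lemma term_repr (t : ℝ) {n : ℕ} (hn : 1 ≤ n) :
    (-1 : ℂ) ^ (n + 1) * ((n : ℂ)) ^ (-(1 / 2 + t * Complex.I)) =
      (((-1 : ℝ) ^ (n + 1) * (Real.cos (t * Real.log n) / Real.sqrt n) : ℝ) : ℂ)
      - Complex.I * (((-1 : ℝ) ^ (n + 1) * (Real.sin (t * Real.log n) / Real.sqrt n) : ℝ) : ℂ) := by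
  have hn0 : (0 : ℝ) < n := by exact_mod_cast hn
  have hlog : Complex.log ((n : ℂ)) = ((Real.log n : ℝ) : ℂ) := by
    rw [show ((n : ℕ) : ℂ) = (((n : ℝ)) : ℂ) by push_cast; rfl, Complex.ofReal_log hn0.le]
  have h1 : ((n : ℂ)) ^ (-(1 / 2 + t * Complex.I))
      = Complex.exp (((-(Real.log n / 2) : ℝ) : ℂ)
          + ((-(t * Real.log n) : ℝ) : ℂ) * Complex.I) := by
    rw [Complex.cpow_def_of_ne_zero (Nat.cast_ne_zero.2 (by omega)), hlog]
    congr 1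
    push_cast
    ring
  rw [h1, Complex.exp_add, Complex.exp_mul_I, ← Complex.ofReal_exp, ← Complex.ofReal_cos,
    ← Complex.ofReal_sin]
  have hexp : Real.exp (-(Real.log n / 2)) = (Real.sqrt n)⁻¹ := by
    rw [Real.sqrt_eq_rpow, ← Real.rpow_neg hn0.le, Real.rpow_def_of_pos hn0]
    ring_nf
  rw [hexp, Real.cos_neg, Real.sin_neg]
  push_cast
  field_simp
  ring


lemma sum_sq_split (k : ℕ) (F : ℕ → ℕ → ℝ) (hF : ∀ n m, F n m = F m n) :
    ∑ n ∈ Finset.Icc 1 k, ∑ m ∈ Finset.Icc 1 k, F n m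
      = ∑ n ∈ Finset.Icc 1 k, F n n
        + 2 * ∑ n ∈ Finset.Icc 1 k, ∑ m ∈ Finset.Ioc n k, F n m := by
  have hsplit : ∀ n ∈ Finset.Icc 1 k,
      ∑ m ∈ Finset.Icc 1 k, F n m
        = (∑ m ∈ Finset.Ico 1 n, F n m + F n n) + ∑ m ∈ Finset.Ioc n k, F n m := by
    intro n hn
    rw [Finset.mem_Icc] at hn
    have e1 : ∑ m ∈ Finset.Icc 1 k, F n m
        = ∑ m ∈ Finset.Icc 1 n, F n m + ∑ m ∈ Finset.Ioc n k, F n m := by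
      rw [show Finset.Icc 1 k = Finset.Ioc 0 k from Finset.Icc_add_one_left_eq_Ioc (a := 0) (b := k),
        show Finset.Icc 1 n = Finset.Ioc 0 n from Finset.Icc_add_one_left_eq_Ioc (a := 0) (b := n),
        ← Finset.sum_Ioc_consecutive _ (Nat.zero_le n) hn.2]
    have e2 : ∑ m ∈ Finset.Icc 1 n, F n m = ∑ m ∈ Finset.Ico 1 n, F n m + F n n := by
      rw [← Finset.Ico_add_one_right_eq_Icc, Finset.sum_Ico_succ_top hn.1]
    rw [e1, e2]
  rw [Finset.sum_congr rfl hsplit, Finset.sum_add_distrib, Finset.sum_add_distrib]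
  have hswap : ∑ n ∈ Finset.Icc 1 k, ∑ m ∈ Finset.Ico 1 n, F n m
      = ∑ n ∈ Finset.Icc 1 k, ∑ m ∈ Finset.Ioc n k, F n m := by
    rw [Finset.sum_comm' (t' := Finset.Icc 1 k) (s' := fun m => Finset.Ioc m k)
      (by intro n m; simp only [Finset.mem_Icc, Finset.mem_Ico, Finset.mem_Ioc]; omega)]
    apply Finset.sum_congr rfl
    intro m _
    apply Finset.sum_congr rfl
    intro n _
    exact hF n m
  rw [hswap]
  ring


theorem gamma_from_zeta_zero (t : ℝ)
    (hzero : riemannZeta (1 / 2 + ↑t * Complex.I) = 0) :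
    Tendsto (fun k : ℕ =>
        2 * ∑ n ∈ Finset.Icc 1 k, ∑ m ∈ Finset.Ioc n k,
            (-1 : ℝ) ^ (m + n + 1)
              * Real.cos (t * Real.log ((m : ℝ) / n))
              / Real.sqrt ((m : ℝ) * n)
          - Real.log k)
      atTop (nhds Real.eulerMascheroniConstant) := by
  set s₀ : ℂ := 1 / 2 + t * Complex.I with hs₀def
  set a : ℕ → ℝ := fun n => (-1 : ℝ) ^ (n + 1) * (Real.cos (t * Real.log n) / Real.sqrt n)
    with hadef
  set b : ℕ → ℝ := fun n => (-1 : ℝ) ^ (n + 1) * (Real.sin (t * Real.log n) / Real.sqrt n)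
    with hbdef
  set C : ℕ → ℝ := fun k => ∑ n ∈ Finset.Icc 1 k, a n with hCdef
  set D : ℕ → ℝ := fun k => ∑ n ∈ Finset.Icc 1 k, b n with hDdef
  -- representation of Spart
  have hrepr : ∀ k, Spart s₀ k = ((C k : ℝ) : ℂ) - Complex.I * ((D k : ℝ) : ℂ) := by
    intro k
    rw [Spart, hCdef, hDdef]
    push_cast
    rw [Finset.mul_sum, ← Finset.sum_sub_distrib]
    apply Finset.sum_congr rfl
    intro n hn
    rw [Finset.mem_Icc] at hn
    simp only [hadef, hbdef]
    exact term_repr t hn.1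
  -- limits of C and D
  have hS := Spart_tendsto_zero hzero
  have hC : Tendsto C atTop (nhds 0) := by
    have h1 : Tendsto (fun k => (Spart s₀ k).re) atTop (nhds (0 : ℂ).re) :=
      (Complex.continuous_re.tendsto 0).comp hS
    simp only [Complex.zero_re] at h1
    apply h1.congr
    intro k
    rw [hrepr k]
    simp
  have hD : Tendsto D atTop (nhds 0) := by
    have h1 : Tendsto (fun k => -(Spart s₀ k).im) atTop (nhds (-(0 : ℂ).im)) :=
      ((Complex.continuous_im.tendsto 0).comp hS).neg
    simp only [Complex.zero_im, neg_zero] at h1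
    apply h1.congr
    intro k
    rw [hrepr k]
    simp
  -- the key algebraic identity
  have hkey : ∀ k : ℕ,
      2 * ∑ n ∈ Finset.Icc 1 k, ∑ m ∈ Finset.Ioc n k,
          (-1 : ℝ) ^ (m + n + 1) * Real.cos (t * Real.log ((m : ℝ) / n))
            / Real.sqrt ((m : ℝ) * n)
        = (∑ n ∈ Finset.Icc 1 k, 1 / (n : ℝ)) - (C k ^ 2 + D k ^ 2) := by
    intro k
    set F : ℕ → ℕ → ℝ := fun n m => a n * a m + b n * b m with hFdef
    have hF : ∀ n m, F n m = F m n := fun n m => by simp only [hFdef]; ring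
    have hsq : C k ^ 2 + D k ^ 2
        = ∑ n ∈ Finset.Icc 1 k, ∑ m ∈ Finset.Icc 1 k, F n m := by
      simp only [hCdef, hDdef, hFdef, Finset.sum_add_distrib.symm]
      rw [sq, sq, Finset.sum_mul_sum, Finset.sum_mul_sum, ← Finset.sum_add_distrib]
      apply Finset.sum_congr rfl
      intro n _
      rw [← Finset.sum_add_distrib]
    have hdiag : ∀ n ∈ Finset.Icc 1 k, F n n = 1 / (n : ℝ) := by
      intro n hn
      rw [Finset.mem_Icc] at hn
      have hn0 : (0 : ℝ) < n := by exact_mod_cast hn.1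
      have h1 : ((-1 : ℝ) ^ (n + 1)) ^ 2 = 1 := by
        rw [← pow_mul]; exact Even.neg_one_pow ⟨n + 1, by ring⟩
      have h2 : Real.sqrt n * Real.sqrt n = n := Real.mul_self_sqrt hn0.le
      have h3 : Real.cos (t * Real.log n) ^ 2 + Real.sin (t * Real.log n) ^ 2 = 1 :=
        Real.cos_sq_add_sin_sq _
      have : F n n = (Real.cos (t * Real.log n) ^ 2 + Real.sin (t * Real.log n) ^ 2)
          * ((-1 : ℝ) ^ (n + 1)) ^ 2 / (Real.sqrt n * Real.sqrt n) := by
        simp only [hFdef, hadef, hbdef]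
        ring
      rw [this, h3, h1, h2]
      ring
    have hcross : ∀ n ∈ Finset.Icc 1 k, ∀ m ∈ Finset.Ioc n k,
        F n m = -((-1 : ℝ) ^ (m + n + 1) * Real.cos (t * Real.log ((m : ℝ) / n))
          / Real.sqrt ((m : ℝ) * n)) := by
      intro n hn m hm
      rw [Finset.mem_Icc] at hn
      rw [Finset.mem_Ioc] at hm
      have hn0 : (0 : ℝ) < n := by exact_mod_cast hn.1
      have hm0 : (0 : ℝ) < m := by
        have : 1 ≤ m := le_trans hn.1 hm.1.le
        exact_mod_cast this
      have hlog : Real.log ((m : ℝ) / n) = Real.log m - Real.log n :=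
        Real.log_div hm0.ne' hn0.ne'
      have hcos : Real.cos (t * Real.log ((m : ℝ) / n))
          = Real.cos (t * Real.log m) * Real.cos (t * Real.log n)
            + Real.sin (t * Real.log m) * Real.sin (t * Real.log n) := by
        rw [hlog, mul_sub, Real.cos_sub]
      have hsqrt : Real.sqrt ((m : ℝ) * n) = Real.sqrt m * Real.sqrt n :=
        Real.sqrt_mul (by positivity) _
      have hsign : ((-1 : ℝ)) ^ (m + n + 1) = -(((-1 : ℝ)) ^ (n + 1) * ((-1 : ℝ)) ^ (m + 1)) := by
        rw [← pow_add, (by ring : (n + 1) + (m + 1) = (m + n + 1) + 1), pow_succ]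
        ring
      rw [hcos, hsqrt, hsign]
      simp only [hFdef, hadef, hbdef]
      have hsm : Real.sqrt (m : ℝ) ≠ 0 := by positivity
      have hsn : Real.sqrt (n : ℝ) ≠ 0 := by positivity
      field_simp
    have hsplit := sum_sq_split k F hF
    rw [Finset.sum_congr rfl hdiag] at hsplit
    have hinner : ∑ n ∈ Finset.Icc 1 k, ∑ m ∈ Finset.Ioc n k, F n m
        = -∑ n ∈ Finset.Icc 1 k, ∑ m ∈ Finset.Ioc n k,
            (-1 : ℝ) ^ (m + n + 1) * Real.cos (t * Real.log ((m : ℝ) / n))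
              / Real.sqrt ((m : ℝ) * n) := by
      rw [← Finset.sum_neg_distrib]
      apply Finset.sum_congr rfl
      intro n hn
      rw [← Finset.sum_neg_distrib]
      exact Finset.sum_congr rfl fun m hm => by rw [hcross n hn m hm]
    rw [hinner] at hsplit
    rw [hsq, hsplit]
    ring
  -- harmonic sum representation
  have hharm : ∀ k : ℕ, (harmonic k : ℝ) = ∑ n ∈ Finset.Icc 1 k, 1 / (n : ℝ) := by
    intro k
    rw [harmonic_eq_sum_Icc]
    push_cast
    apply Finset.sum_congr rfl
    intro n _
    rw [one_div]
  -- final limit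
  have hlim : Tendsto (fun k : ℕ => ((harmonic k : ℝ) - Real.log k) - (C k ^ 2 + D k ^ 2))
      atTop (nhds Real.eulerMascheroniConstant) := by
    have h1 := Real.tendsto_harmonic_sub_log
    have h2 : Tendsto (fun k : ℕ => C k ^ 2 + D k ^ 2) atTop (nhds 0) := by
      have := ((hC.mul hC).add (hD.mul hD))
      simp only [mul_zero, add_zero] at this
      apply this.congr
      intro k
      ring
    have := h1.sub h2
    rwa [sub_zero] at this
  apply hlim.congr
  intro k
  rw [hkey k, ← hharm k]
  ring
end
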